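/- arXiv:1302.3202 — 4 statements merged into one kernel-verified Lean document; each statement's English description precedes it below -/
import Mathlib

section
/- Let θ > 0, p > θ, C ∈ (0,∞), let (X,d) be a metric space and m a Borel probability measure on X satisfying m(B(r,x))² ≥ r^θ / C for all x ∈ X and all r ∈ [0,1]. Let Φ(z) = z^p (so Φ⁻¹(v) = v^{1/p}). Then for every V > 0 and all x₁,x₂ ∈ X with d(x₁,x₂) ≤ 1, the minorizing integral satisfies w(x₁,x₂;V) ≤ 12 · (4VC)^{1/p} · d(x₁,x₂)^{1−θ/p} / (1 − θ/p). -/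
open MeasureTheory Metric Set Filter

/-- The generalized inverse `Φ⁻¹(v) = sup {z ≥ 0 : Φ z ≤ v}`. -/
noncomputable def orlInv (Φ : ℝ → ℝ) (v : ℝ) : ℝ :=
  sSup {z : ℝ | 0 ≤ z ∧ Φ z ≤ v}

/-- The minorizing integral
`w(x₁,x₂;V) = 6 ∫₀^{d(x₁,x₂)} [Φ⁻¹(4V/m(B(r,x₁))²) + Φ⁻¹(4V/m(B(r,x₂))²)] dr`. -/
noncomputable def minorW {X : Type*} [PseudoMetricSpace X] [MeasurableSpace X]
    (m : Measure X) (Φ : ℝ → ℝ) (x₁ x₂ : X) (V : ℝ) : ℝ :=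
  6 * ∫ r in Set.Ioo (0 : ℝ) (dist x₁ x₂),
      (orlInv Φ (4 * V / ((m (closedBall x₁ r)).toReal) ^ 2)
        + orlInv Φ (4 * V / ((m (closedBall x₂ r)).toReal) ^ 2))

lemma orlInv_rpow {p : ℝ} (hp : 0 < p) {v : ℝ} (hv : 0 ≤ v) :
    orlInv (fun z => z ^ p) v = v ^ (1 / p) := by
  unfold orlInv
  have hset : {z : ℝ | 0 ≤ z ∧ (fun z => z ^ p) z ≤ v} = Set.Icc 0 (v ^ (1 / p)) := by
    ext z
    simp only [Set.mem_setOf_eq, Set.mem_Icc]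
    constructor
    · rintro ⟨hz, hzp⟩
      refine ⟨hz, ?_⟩
      have h1 : (z ^ p) ^ (1 / p) ≤ v ^ (1 / p) :=
        Real.rpow_le_rpow (Real.rpow_nonneg hz p) hzp (by positivity)
      rwa [← Real.rpow_mul hz, mul_one_div, div_self hp.ne', Real.rpow_one] at h1
    · rintro ⟨hz, hzp⟩
      refine ⟨hz, ?_⟩
      have h1 : z ^ p ≤ (v ^ (1 / p)) ^ p :=
        Real.rpow_le_rpow hz hzp hp.le
      rwa [← Real.rpow_mul hv, one_div, inv_mul_cancel₀ hp.ne', Real.rpow_one] at h1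
  rw [hset, csSup_Icc (Real.rpow_nonneg hv _)]

/-- The computational core of **Proposition 2.1** of the paper: for
`Φ(z) = z^p` and a measure with `m(B(r,x))² ≥ r^θ/C` on `[0,1]`, the
minorizing integral satisfies
`w(x₁,x₂;V) ≤ 12 (4VC)^{1/p} d(x₁,x₂)^{1-θ/p}/(1-θ/p)` whenever `d(x₁,x₂) ≤ 1`. -/
theorem minorW_rpow_bound
    {X : Type*} [MetricSpace X] [MeasurableSpace X]
    (m : Measure X) [IsProbabilityMeasure m]
    (θ p C : ℝ) (hθ : 0 < θ) (hp : θ < p) (hC : 0 < C)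
    (hm : ∀ (x : X) (r : ℝ), r ∈ Set.Icc (0 : ℝ) 1 →
      r ^ θ / C ≤ ((m (closedBall x r)).toReal) ^ 2)
    (V : ℝ) (hV : 0 < V) (x₁ x₂ : X) (hd : dist x₁ x₂ ≤ 1) :
    minorW m (fun z => z ^ p) x₁ x₂ V ≤
      12 * (4 * V * C) ^ (1 / p) * dist x₁ x₂ ^ (1 - θ / p) / (1 - θ / p) := by
  have hp0 : 0 < p := hθ.trans hp
  set D := dist x₁ x₂ with hD
  have hD0 : 0 ≤ D := dist_nonneg
  set K : ℝ := (4 * V * C) ^ (1 / p) with hK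
  have hK0 : 0 ≤ K := Real.rpow_nonneg (by positivity) _
  have he : 0 < 1 - θ / p := by
    have : θ / p < 1 := (div_lt_one hp0).mpr hp
    linarith
  -- pointwise bound for orlInv term at a fixed center x
  have key : ∀ (x : X) (r : ℝ), r ∈ Set.Ioo (0 : ℝ) D →
      orlInv (fun z => z ^ p) (4 * V / ((m (closedBall x r)).toReal) ^ 2)
        ≤ K * r ^ (-(θ / p)) := by
    intro x r hr
    have hr0 : 0 < r := hr.1
    have hr1 : r ≤ 1 := le_trans hr.2.le hd
    have hball := hm x r ⟨hr0.le, hr1⟩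
    have hrθ : 0 < r ^ θ / C := by positivity
    have hball0 : 0 < ((m (closedBall x r)).toReal) ^ 2 := lt_of_lt_of_le hrθ hball
    have hv0 : 0 ≤ 4 * V / ((m (closedBall x r)).toReal) ^ 2 := by positivity
    rw [orlInv_rpow hp0 hv0]
    have h1 : 4 * V / ((m (closedBall x r)).toReal) ^ 2 ≤ 4 * V * C / r ^ θ := by
      rw [div_le_div_iff₀ hball0 (by positivity)]
      calc 4 * V * r ^ θ = (4 * V) * (C * (r ^ θ / C)) := by
            field_simp
        _ ≤ (4 * V) * (C * ((m (closedBall x r)).toReal) ^ 2) := by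
            have := mul_le_mul_of_nonneg_left hball hC.le
            nlinarith [hV.le]
        _ = 4 * V * C * ((m (closedBall x r)).toReal) ^ 2 := by ring
    have h2 : (4 * V / ((m (closedBall x r)).toReal) ^ 2) ^ (1 / p)
        ≤ (4 * V * C / r ^ θ) ^ (1 / p) :=
      Real.rpow_le_rpow hv0 h1 (by positivity)
    refine h2.trans (le_of_eq ?_)
    rw [div_eq_mul_inv, ← Real.rpow_neg hr0.le,
      Real.mul_rpow (by positivity) (Real.rpow_nonneg hr0.le _)]
    congr 1
    rw [← Real.rpow_mul hr0.le]
    ring_nf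
  -- rewrite / bound the integral
  have hmono : ∫ r in Set.Ioo (0 : ℝ) D,
      (orlInv (fun z => z ^ p) (4 * V / ((m (closedBall x₁ r)).toReal) ^ 2)
        + orlInv (fun z => z ^ p) (4 * V / ((m (closedBall x₂ r)).toReal) ^ 2))
      ≤ ∫ r in Set.Ioo (0 : ℝ) D, (2 * K) * r ^ (-(θ / p)) := by
    apply integral_mono_of_nonneg
    · filter_upwards [ae_restrict_mem measurableSet_Ioo] with r hr
      have hr0 : 0 < r := hr.1
      have hr1 : r ≤ 1 := le_trans hr.2.le hd
      have h1 := hm x₁ r ⟨hr0.le, hr1⟩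
      have h2 := hm x₂ r ⟨hr0.le, hr1⟩
      have hrθ : 0 < r ^ θ / C := by positivity
      have hb1 : 0 < ((m (closedBall x₁ r)).toReal) ^ 2 := lt_of_lt_of_le hrθ h1
      have hb2 : 0 < ((m (closedBall x₂ r)).toReal) ^ 2 := lt_of_lt_of_le hrθ h2
      have e1 := orlInv_rpow hp0 (v := 4 * V / ((m (closedBall x₁ r)).toReal) ^ 2)
        (by positivity)
      have e2 := orlInv_rpow hp0 (v := 4 * V / ((m (closedBall x₂ r)).toReal) ^ 2)
        (by positivity)
      simp only [Pi.zero_apply]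
      rw [e1, e2]
      positivity
    · -- integrability of the majorant
      have hint : IntervalIntegrable (fun r : ℝ => (2 * K) * r ^ (-(θ / p))) volume 0 D := by
        exact (intervalIntegral.intervalIntegrable_rpow'
          (by linarith [(div_lt_one hp0).mpr hp])).const_mul (2 * K)
      rw [intervalIntegrable_iff_integrableOn_Ioo_of_le hD0] at hint
      exact hint
    · filter_upwards [ae_restrict_mem measurableSet_Ioo] with r hr
      have h1 := key x₁ r hr
      have h2 := key x₂ r hr
      calc _ ≤ K * r ^ (-(θ / p)) + K * r ^ (-(θ / p)) := add_le_add h1 h2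
        _ = (2 * K) * r ^ (-(θ / p)) := by ring
  -- compute the majorant integral
  have hcalc : ∫ r in Set.Ioo (0 : ℝ) D, (2 * K) * r ^ (-(θ / p))
      = 2 * K * (D ^ (1 - θ / p) / (1 - θ / p)) := by
    rw [← integral_Ioc_eq_integral_Ioo, ← intervalIntegral.integral_of_le hD0,
      intervalIntegral.integral_const_mul, integral_rpow (Or.inl (by linarith))]
    have h0 : (0 : ℝ) ^ (-(θ / p) + 1) = 0 := by
      rw [Real.zero_rpow]; linarith
    rw [h0]
    ring_nf
  -- conclude
  unfold minorW
  rw [← hD]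
  calc 6 * ∫ r in Set.Ioo (0 : ℝ) D,
        (orlInv (fun z => z ^ p) (4 * V / ((m (closedBall x₁ r)).toReal) ^ 2)
          + orlInv (fun z => z ^ p) (4 * V / ((m (closedBall x₂ r)).toReal) ^ 2))
      ≤ 6 * (2 * K * (D ^ (1 - θ / p) / (1 - θ / p))) := by
        rw [← hcalc]; linarith [hmono]
    _ = 12 * K * D ^ (1 - θ / p) / (1 - θ / p) := by ring
end

section
/- Let Φ : (0,∞) → (0,∞) be strictly increasing and differentiable with u ↦ log Φ(u) convex and (log Φ)'(u) > 0 for u > 0. Let γ ∈ (0,1), C₂ > 0, D > 0, N : (0,D) → [1,∞) a nonincreasing function, and Q : (0,∞) → [0,1] a function satisfying Q(u) ≤ N(δ)/Φ(u/(1 + δ/C₂)) for all u > 0 and all δ ∈ (0,D). Define δ₀(u) = C₂·γ / (u·(log Φ)'(u)). Then for every u > 0 such that δ₀(u) < D: Q(u) ≤ (1−γ)^{−1} · N(δ₀(u)) / Φ(u). -/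
open MeasureTheory Metric Set Filter

/-- **Example 4.1** of Section 4 of the paper (inequality (4.20)): optimizing the
covering-number bound `Q(u) ≤ N(δ)/Φ(u/(1+δ/C₂))` for a logarithmically convex
Young–Orlicz function `Φ` by the choice `δ = δ₀(u) = C₂γ/(u·(log Φ)'(u))` gives
`Q(u) ≤ (1−γ)⁻¹ N(δ₀(u))/Φ(u)` whenever `δ₀(u) < D`. -/
theorem example_4_1_log_convex_optimization
    (Φ : ℝ → ℝ)
    (hΦpos : ∀ u : ℝ, 0 < u → 0 < Φ u)
    (hΦmono : StrictMonoOn Φ (Set.Ioi 0))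
    (hΦdiff : ∀ u : ℝ, 0 < u → DifferentiableAt ℝ Φ u)
    (hΦlogconv : ConvexOn ℝ (Set.Ioi 0) (fun u => Real.log (Φ u)))
    (hΦderiv : ∀ u : ℝ, 0 < u → 0 < deriv (fun v => Real.log (Φ v)) u)
    (γ C₂ D : ℝ) (hγ : γ ∈ Set.Ioo (0 : ℝ) 1) (hC₂ : 0 < C₂) (hD : 0 < D)
    (N : ℝ → ℝ)
    (hN1 : ∀ δ ∈ Set.Ioo (0 : ℝ) D, 1 ≤ N δ)
    (hNanti : AntitoneOn N (Set.Ioo (0 : ℝ) D))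
    (Q : ℝ → ℝ) (hQ : ∀ u : ℝ, 0 < u → Q u ∈ Set.Icc (0 : ℝ) 1)
    (hQbound : ∀ u : ℝ, 0 < u → ∀ δ ∈ Set.Ioo (0 : ℝ) D,
      Q u ≤ N δ / Φ (u / (1 + δ / C₂)))
    (u : ℝ) (hu : 0 < u)
    (hδ₀ : C₂ * γ / (u * deriv (fun v => Real.log (Φ v)) u) < D) :
    Q u ≤ (1 - γ)⁻¹ *
      N (C₂ * γ / (u * deriv (fun v => Real.log (Φ v)) u)) / Φ u := by
  obtain ⟨hγ0, hγ1⟩ := hγ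
  set L : ℝ → ℝ := fun v => Real.log (Φ v) with hL
  set L' : ℝ := deriv L u with hL'def
  have hL' : 0 < L' := hΦderiv u hu
  set δ₀ : ℝ := C₂ * γ / (u * L') with hδ₀def
  have hδ₀pos : 0 < δ₀ := by positivity
  have hδ₀mem : δ₀ ∈ Set.Ioo (0 : ℝ) D := ⟨hδ₀pos, hδ₀⟩
  have ht : 0 < δ₀ / C₂ := by positivity
  have h1t : (1 : ℝ) < 1 + δ₀ / C₂ := by linarith
  set v : ℝ := u / (1 + δ₀ / C₂) with hvdef
  have hv0 : 0 < v := by positivity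
  have hvu : v < u := by
    rw [hvdef, div_lt_iff₀ (by linarith)]
    nlinarith
  -- differentiability of L at u
  have hLd : DifferentiableAt ℝ L u := (hΦdiff u hu).log (hΦpos u hu).ne'
  -- tangent line inequality
  have hslope : slope L v u ≤ L' :=
    hΦlogconv.slope_le_deriv (Set.mem_Ioi.mpr hv0) (Set.mem_Ioi.mpr hu) hvu hLd
  have hslope' : L u - L v ≤ L' * (u - v) := by
    rw [slope_comm, slope_def_field] at hslope
    have h := (div_le_iff_of_neg (by linarith : v - u < 0)).mp hslope
    nlinarith [h]
  have hut : u * (δ₀ / C₂) = γ / L' := by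
    rw [hδ₀def]
    field_simp
  have hv_ge : u * (1 - δ₀ / C₂) ≤ v := by
    rw [hvdef, le_div_iff₀ (by linarith)]
    nlinarith [mul_nonneg hu.le (mul_nonneg ht.le ht.le)]
  have huv_le : u - v ≤ γ / L' := by
    have hexp : u * (1 - δ₀ / C₂) = u - u * (δ₀ / C₂) := by ring
    linarith
  have hkey : L u - γ ≤ L v := by
    have : L' * (u - v) ≤ γ := by
      have := mul_le_mul_of_nonneg_left huv_le hL'.le
      rwa [mul_div_cancel₀ _ hL'.ne'] at this
    linarith [hslope']
  -- Φ v ≥ (1 - γ) Φ u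
  have hΦv : (1 - γ) * Φ u ≤ Φ v := by
    have hexp : Real.exp (L u - γ) ≤ Real.exp (L v) := Real.exp_le_exp.mpr hkey
    have hLu : Real.exp (L u) = Φ u := Real.exp_log (hΦpos u hu)
    have hLv : Real.exp (L v) = Φ v := Real.exp_log (hΦpos v hv0)
    have h1γ : 1 - γ ≤ Real.exp (-γ) := by
      have := Real.add_one_le_exp (-γ); linarith
    calc (1 - γ) * Φ u ≤ Real.exp (-γ) * Φ u :=
          mul_le_mul_of_nonneg_right h1γ (hΦpos u hu).le
      _ = Real.exp (L u - γ) := by rw [← hLu, ← Real.exp_add]; ring_nf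
      _ ≤ Real.exp (L v) := hexp
      _ = Φ v := hLv
  have hΦvpos : 0 < Φ v := hΦpos v hv0
  have hNpos : 0 < N δ₀ := lt_of_lt_of_le one_pos (hN1 δ₀ hδ₀mem)
  have hbound := hQbound u hu δ₀ hδ₀mem
  have h1γΦ : 0 < (1 - γ) * Φ u := mul_pos (by linarith) (hΦpos u hu)
  calc Q u ≤ N δ₀ / Φ v := hbound
    _ ≤ N δ₀ / ((1 - γ) * Φ u) :=
        div_le_div_of_nonneg_left hNpos.le h1γΦ hΦv
    _ = (1 - γ)⁻¹ * N δ₀ / Φ u := by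
        field_simp
end

section
/- Let C₂, C₃ ∈ (0,∞), κ > 0, D ∈ (0,∞], let Φ(u) = exp(u²/2) − 1, let N : (0,D) → [1,∞) satisfy N(ε) ≤ C₃·ε^{−κ} for ε ∈ (0,D), and let Q : (0,∞) → [0,1] satisfy Q(u) ≤ N(δ)/Φ(u/(1 + δ/C₂)) for all u > 0 and all δ ∈ (0,D). Then there exists u₀ ∈ (0,∞), depending only on C₂, C₃, κ and D, such that for all u ≥ u₀ one has Q(u) ≤ 2 · C₃ · C₂^{−κ} · κ^{−κ} · (κ+1)^{κ+1} · u^{2κ} · e^{−u²/2}. -/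
open MeasureTheory Metric Set Filter
open scoped ENNReal

/-! Choose `δ = C₂ κ / ((κ + 1) u²)`, which is admissible for large `u`. Since
`(1 + t)⁻² ≥ 1 - 2t`, the effective level satisfies `(u / (1 + δ/C₂))² ≥ u² - 2κ/(κ+1)`, and
`e^{-s} ≥ 1 - s` turns this into `Φ(u / (1 + δ/C₂)) ≥ e^{u²/2} / (κ + 1) - 1`, which is at least
`e^{u²/2} / (2(κ + 1))` once `e^{u²/2} ≥ 2(κ + 1)`. The numerator `N(δ) ≤ C₃ δ^{-κ}` supplies
the factor `u^{2κ}`. -/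

lemma exists_pos_forall_ge_of_eventually_atTop {P : ℝ → Prop} (h : ∀ᶠ u in atTop, P u) :
    ∃ u₀ : ℝ, 0 < u₀ ∧ ∀ u : ℝ, u₀ ≤ u → P u := by
  obtain ⟨a, ha⟩ := eventually_atTop.1 h
  exact ⟨max a 1, by positivity, fun u hu => ha u (le_of_max_le_left hu)⟩

lemma sq_sub_two_mul_le_sq_div_one_add (x : ℝ) {t : ℝ} (ht : 0 ≤ t) :
    x ^ 2 - 2 * t * x ^ 2 ≤ (x / (1 + t)) ^ 2 := by
  rw [div_pow, le_div_iff₀ (by positivity)]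
  nlinarith [mul_nonneg (mul_nonneg ht ht) (sq_nonneg x),
    mul_nonneg (mul_nonneg (mul_nonneg ht ht) ht) (sq_nonneg x)]

lemma exp_mul_one_sub_le_exp_sub (a s : ℝ) : Real.exp a * (1 - s) ≤ Real.exp (a - s) := by
  rw [Real.exp_sub, div_eq_mul_inv, ← Real.exp_neg]
  gcongr
  linarith [Real.add_one_le_exp (-s)]

lemma exp_div_le_exp_sq_div_one_add_sub_one {κ u : ℝ} (hκ : 0 < κ) (hu : 0 < u)
    (hlarge : 2 * (κ + 1) ≤ Real.exp (u ^ 2 / 2)) :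
    Real.exp (u ^ 2 / 2) / (2 * (κ + 1)) ≤
      Real.exp ((u / (1 + κ / ((κ + 1) * u ^ 2))) ^ 2 / 2) - 1 := by
  have hexponent : u ^ 2 / 2 - κ / (κ + 1) ≤ (u / (1 + κ / ((κ + 1) * u ^ 2))) ^ 2 / 2 := by
    have h := sq_sub_two_mul_le_sq_div_one_add u (t := κ / ((κ + 1) * u ^ 2)) (by positivity)
    have hcancel : κ / ((κ + 1) * u ^ 2) * u ^ 2 = κ / (κ + 1) := by field_simp
    rw [mul_assoc, hcancel] at h
    linarith
  have hshift : Real.exp (u ^ 2 / 2) / (κ + 1) ≤ Real.exp (u ^ 2 / 2 - κ / (κ + 1)) := by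
    have h1s : 1 - κ / (κ + 1) = (κ + 1)⁻¹ := by field_simp; ring
    calc Real.exp (u ^ 2 / 2) / (κ + 1) = Real.exp (u ^ 2 / 2) * (1 - κ / (κ + 1)) := by
          rw [h1s, div_eq_mul_inv]
      _ ≤ _ := exp_mul_one_sub_le_exp_sub _ _
  have hhalf : Real.exp (u ^ 2 / 2) / (2 * (κ + 1)) ≤ Real.exp (u ^ 2 / 2) / (κ + 1) - 1 := by
    have hge : 2 ≤ Real.exp (u ^ 2 / 2) / (κ + 1) := by rwa [le_div_iff₀ (by positivity)]
    rw [mul_comm, ← div_div]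
    linarith
  linarith [Real.exp_le_exp.2 hexponent]

lemma mul_rpow_neg_div_exp_eq {C₂ C₃ κ u : ℝ} (hC₂ : 0 < C₂) (hκ : 0 < κ) (hu : 0 < u) :
    C₃ * (C₂ * (κ / ((κ + 1) * u ^ 2))) ^ (-κ) / (Real.exp (u ^ 2 / 2) / (2 * (κ + 1))) =
      2 * C₃ * C₂ ^ (-κ) * κ ^ (-κ) * (κ + 1) ^ (κ + 1) *
        u ^ (2 * κ) * Real.exp (-(u ^ 2) / 2) := by
  have hκ1 : 0 < κ + 1 := by linarith
  have hu2κ : (u ^ 2) ^ κ = u ^ (2 * κ) := by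
    rw [← Real.rpow_natCast u 2, ← Real.rpow_mul hu.le]
    norm_num
  rw [Real.rpow_neg (by positivity), Real.mul_rpow hC₂.le (by positivity),
    Real.div_rpow hκ.le (by positivity), Real.mul_rpow hκ1.le (by positivity), hu2κ,
    Real.rpow_add hκ1, Real.rpow_one, Real.rpow_neg hC₂.le, Real.rpow_neg hκ.le,
    neg_div, Real.exp_neg]
  have : 0 < u ^ (2 * κ) := by positivity
  field_simp

lemma tendsto_exp_sq_div_two_atTop :
    Tendsto (fun u : ℝ => Real.exp (u ^ 2 / 2)) atTop atTop :=
  Real.tendsto_exp_atTop.comp ((tendsto_pow_atTop two_ne_zero).atTop_div_const two_pos)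

lemma tendsto_const_mul_div_mul_sq_nhds_zero (a b : ℝ) {c : ℝ} (hc : 0 < c) :
    Tendsto (fun u : ℝ => a * (b / (c * u ^ 2))) atTop (nhds 0) := by
  simpa using (tendsto_const_nhds.div_atTop
    ((tendsto_pow_atTop two_ne_zero).const_mul_atTop hc)).const_mul a

theorem example_4_2_subgaussian_general
    (C₂ C₃ κ : ℝ) (hC₂ : 0 < C₂) (hC₃ : 0 < C₃) (hκ : 0 < κ)
    (D : ℝ≥0∞) (hD : 0 < D)
    (N : ℝ → ℝ)
    (hN : ∀ ε : ℝ, 0 < ε → ENNReal.ofReal ε < D → N ε ≤ C₃ * ε ^ (-κ))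
    (Q : ℝ → ℝ)
    (hQbound : ∀ u : ℝ, 0 < u → ∀ δ : ℝ, 0 < δ → ENNReal.ofReal δ < D →
      Q u ≤ N δ / (Real.exp ((u / (1 + δ / C₂)) ^ 2 / 2) - 1)) :
    ∃ u₀ : ℝ, 0 < u₀ ∧ ∀ u : ℝ, u₀ ≤ u →
      Q u ≤ 2 * C₃ * C₂ ^ (-κ) * κ ^ (-κ) * (κ + 1) ^ (κ + 1) *
        u ^ (2 * κ) * Real.exp (-(u ^ 2) / 2) := by
  obtain ⟨d, -, hd0, hdD⟩ := ENNReal.lt_iff_exists_real_btwn.1 hD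
  have hκ1 : 0 < κ + 1 := by linarith
  obtain ⟨u₀, hu₀, hlarge⟩ := exists_pos_forall_ge_of_eventually_atTop
    ((eventually_gt_atTop 0).and
      ((tendsto_exp_sq_div_two_atTop.eventually_ge_atTop (2 * (κ + 1))).and
        ((tendsto_const_mul_div_mul_sq_nhds_zero C₂ κ hκ1).eventually_lt_const
          (ENNReal.ofReal_pos.1 hd0))))
  refine ⟨u₀, hu₀, fun u hu => ?_⟩
  obtain ⟨hu, hexp, hδd⟩ := hlarge u hu
  set δ := C₂ * (κ / ((κ + 1) * u ^ 2))
  have hδ : 0 < δ := by positivity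
  have hδD : ENNReal.ofReal δ < D := (ENNReal.ofReal_le_ofReal hδd.le).trans_lt hdD
  calc Q u ≤ N δ / (Real.exp ((u / (1 + δ / C₂)) ^ 2 / 2) - 1) := hQbound u hu δ hδ hδD
    _ ≤ C₃ * δ ^ (-κ) / (Real.exp (u ^ 2 / 2) / (2 * (κ + 1))) := by
      refine div_le_div₀ (by positivity) (hN δ hδ hδD) (by positivity) ?_
      rw [mul_div_cancel_left₀ _ hC₂.ne']
      exact exp_div_le_exp_sq_div_one_add_sub_one hκ hu hexp
    _ = _ := mul_rpow_neg_div_exp_eq hC₂ hκ hu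

/-- **Example 4.2** (inequality (4.22)) of the paper: the subgaussian case
`Φ(u) = e^{u²/2} − 1` of the covering bound of Proposition 4.2 with a polynomial
covering-number bound `N(ε) ≤ C₃ ε^{−κ}` yields, for all large `u`,
`Q(u) ≤ 2 C₃ C₂^{−κ} κ^{−κ} (κ+1)^{κ+1} u^{2κ} e^{−u²/2}`. -/
theorem example_4_2_subgaussian
    (C₂ C₃ κ : ℝ) (hC₂ : 0 < C₂) (hC₃ : 0 < C₃) (hκ : 0 < κ)
    (D : ℝ≥0∞) (hD : 0 < D)
    (N : ℝ → ℝ)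
    (hN1 : ∀ ε : ℝ, 0 < ε → ENNReal.ofReal ε < D → 1 ≤ N ε)
    (hN : ∀ ε : ℝ, 0 < ε → ENNReal.ofReal ε < D → N ε ≤ C₃ * ε ^ (-κ))
    (Q : ℝ → ℝ) (hQ : ∀ u : ℝ, 0 < u → Q u ∈ Set.Icc (0 : ℝ) 1)
    (hQbound : ∀ u : ℝ, 0 < u → ∀ δ : ℝ, 0 < δ → ENNReal.ofReal δ < D →
      Q u ≤ N δ / (Real.exp ((u / (1 + δ / C₂)) ^ 2 / 2) - 1)) :
    ∃ u₀ : ℝ, 0 < u₀ ∧ ∀ u : ℝ, u₀ ≤ u →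
      Q u ≤ 2 * C₃ * C₂ ^ (-κ) * κ ^ (-κ) * (κ + 1) ^ (κ + 1) *
        u ^ (2 * κ) * Real.exp (-(u ^ 2) / 2) :=
  example_4_2_subgaussian_general C₂ C₃ κ hC₂ hC₃ hκ D hD N hN Q hQbound
end

section
/- Let C₂, C₄, C₅ ∈ (0,∞), β > 0, D ∈ (0,∞], let Φ(u) = exp(u²/2) − 1, let N : (0,D) → [1,∞) satisfy N(ε) ≤ C₄·exp(C₅·ε^{−β}) for ε ∈ (0,D), and let Q : (0,∞) → [0,1] satisfy Q(u) ≤ N(δ)/Φ(u/(1 + δ/C₂)) for all u > 0 and all δ ∈ (0,D). Then there exist constants C₆, C₇ ∈ (0,∞), depending only on C₂, C₄, C₅, β and D, such that for all u ≥ C₇: Q(u) ≤ exp( −u²/2 + C₆·u^{2β/(β+1)} ). -/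
open MeasureTheory Metric Set Filter
open scoped ENNReal

set_option maxHeartbeats 1000000 in
/-- **Example 4.3** (inequality (4.24)) of the paper: the subgaussian case
`Φ(u) = e^{u²/2} − 1` of the covering bound of Proposition 4.2 with an
exponential-entropy covering bound `N(ε) ≤ C₄ e^{C₅ ε^{−β}}` yields, for all
large `u`, `Q(u) ≤ exp(−u²/2 + C₆ u^{2β/(β+1)})`. -/
theorem example_4_3_exponential_entropy
    (C₂ C₄ C₅ β : ℝ) (hC₂ : 0 < C₂) (hC₄ : 0 < C₄) (hC₅ : 0 < C₅) (hβ : 0 < β)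
    (D : ℝ≥0∞) (hD : 0 < D)
    (N : ℝ → ℝ)
    (hN1 : ∀ ε : ℝ, 0 < ε → ENNReal.ofReal ε < D → 1 ≤ N ε)
    (hN : ∀ ε : ℝ, 0 < ε → ENNReal.ofReal ε < D →
      N ε ≤ C₄ * Real.exp (C₅ * ε ^ (-β)))
    (Q : ℝ → ℝ) (hQ : ∀ u : ℝ, 0 < u → Q u ∈ Set.Icc (0 : ℝ) 1)
    (hQbound : ∀ u : ℝ, 0 < u → ∀ δ : ℝ, 0 < δ → ENNReal.ofReal δ < D →
      Q u ≤ N δ / (Real.exp ((u / (1 + δ / C₂)) ^ 2 / 2) - 1)) :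
    ∃ C₆ C₇ : ℝ, 0 < C₆ ∧ 0 < C₇ ∧ ∀ u : ℝ, C₇ ≤ u →
      Q u ≤ Real.exp (-(u ^ 2) / 2 + C₆ * u ^ (2 * β / (β + 1))) := by
  obtain ⟨c, hc0, hcD⟩ := exists_between hD
  have hcT : c ≠ ⊤ := (hcD.trans_le le_top).ne
  set d := c.toReal with hddef
  have hd0 : 0 < d := ENNReal.toReal_pos hc0.ne' hcT
  have hβ1 : (0:ℝ) < β + 1 := by linarith
  set γ : ℝ := 2 * β / (β + 1) with hγdef
  have hγ0 : 0 < γ := by positivity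
  refine ⟨C₅ + 1 / C₂ + |Real.log (2 * C₄)| + 1,
    max (max 2 ((4 / C₂) ^ ((β + 1) / 2))) ((1 / d) ^ ((β + 1) / 2)), by positivity, ?_, ?_⟩
  · exact lt_of_lt_of_le two_pos (le_max_of_le_left (le_max_left _ _))
  intro u hu
  have hu2 : (2:ℝ) ≤ u := le_trans (le_max_of_le_left (le_max_left _ _)) hu
  have hu0 : (0:ℝ) < u := by linarith
  have hu1 : (1:ℝ) ≤ u := by linarith
  set δ : ℝ := u ^ (-(2 / (β + 1))) with hδdef
  have hδ0 : 0 < δ := Real.rpow_pos_of_pos hu0 _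
  have hup : 0 < u ^ (2 / (β + 1)) := Real.rpow_pos_of_pos hu0 _
  -- helper : from M ^ ((β+1)/2) ≤ u deduce M ≤ u ^ (2/(β+1))
  have helper : ∀ M : ℝ, 0 ≤ M → M ^ ((β + 1) / 2) ≤ u → M ≤ u ^ (2 / (β + 1)) := by
    intro M hM hMu
    have h1 : (M ^ ((β + 1) / 2)) ^ (2 / (β + 1)) ≤ u ^ (2 / (β + 1)) :=
      Real.rpow_le_rpow (Real.rpow_nonneg hM _) hMu (by positivity)
    have h2 : (M ^ ((β + 1) / 2)) ^ (2 / (β + 1)) = M := by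
      rw [← Real.rpow_mul hM, show ((β + 1) / 2) * (2 / (β + 1)) = 1 by field_simp,
        Real.rpow_one]
    rwa [h2] at h1
  -- δ ≤ d, so ofReal δ < D
  have hδd : δ ≤ d := by
    have h1 : 1 / d ≤ u ^ (2 / (β + 1)) :=
      helper _ (by positivity) (le_trans (le_max_of_le_right le_rfl) hu)
    have h2 : δ = 1 / u ^ (2 / (β + 1)) := by
      rw [hδdef, Real.rpow_neg hu0.le, one_div]
    rw [h2]
    rw [div_le_iff₀ hup]
    rw [div_le_iff₀ hd0] at h1
    linarith
  have hδD : ENNReal.ofReal δ < D :=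
    lt_of_le_of_lt (ENNReal.ofReal_le_ofReal hδd)
      (by rw [hddef, ENNReal.ofReal_toReal hcT]; exact hcD)
  -- key identities
  have hsum : γ + 2 / (β + 1) = 2 := by rw [hγdef]; field_simp
  have hu2eq : u ^ 2 = u ^ γ * u ^ (2 / (β + 1)) := by
    rw [← Real.rpow_add hu0, hsum]
    rw [show (2:ℝ) = ((2:ℕ) : ℝ) by norm_num, Real.rpow_natCast]
  have key1 : δ ^ (-β) = u ^ γ := by
    rw [hδdef, ← Real.rpow_mul hu0.le]
    congr 1
    rw [hγdef]; field_simp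
  have key2 : u ^ 2 * δ = u ^ γ := by
    rw [hu2eq, hδdef, mul_assoc, ← Real.rpow_add hu0]
    simp
  have huγ1 : (1:ℝ) ≤ u ^ γ := by
    calc (1:ℝ) = u ^ (0:ℝ) := (Real.rpow_zero u).symm
    _ ≤ u ^ γ := Real.rpow_le_rpow_of_exponent_le hu1 hγ0.le
  -- the quantity A = u²/2 − u^γ/C₂ is at least 1
  have hq4 : 4 / C₂ ≤ u ^ (2 / (β + 1)) :=
    helper _ (by positivity) (le_trans (le_max_of_le_left (le_max_right _ _)) hu)
  have hdiv : u ^ γ / C₂ ≤ u ^ 2 / 4 := by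
    rw [div_le_div_iff₀ hC₂ (by norm_num : (0:ℝ) < 4)]
    have := mul_le_mul_of_nonneg_left hq4 (Real.rpow_nonneg hu0.le γ)
    rw [← hu2eq] at this
    have h4 : u ^ γ * (4 / C₂) * C₂ = u ^ γ * 4 := by field_simp
    nlinarith [Real.rpow_nonneg hu0.le γ]
  have hA1 : (1:ℝ) ≤ u ^ 2 / 2 - u ^ γ / C₂ := by nlinarith
  -- lower bound for the exponent in Φ
  set x : ℝ := δ / C₂ with hxdef
  have hx0 : (0:ℝ) ≤ x := by positivity
  have hux : u ^ 2 * x = u ^ γ / C₂ := by rw [hxdef, ← mul_div_assoc, key2]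
  have hv : u ^ 2 - 2 * (u ^ 2 * x) ≤ (u / (1 + x)) ^ 2 := by
    rw [div_pow, le_div_iff₀ (by positivity)]
    nlinarith [mul_nonneg (mul_nonneg (sq_nonneg u) (sq_nonneg x)) hx0,
      mul_nonneg (sq_nonneg u) (sq_nonneg x)]
  have hAle : u ^ 2 / 2 - u ^ γ / C₂ ≤ (u / (1 + x)) ^ 2 / 2 := by
    rw [← hux]; linarith
  -- denominator lower bound
  have hexpA : (2:ℝ) ≤ Real.exp (u ^ 2 / 2 - u ^ γ / C₂) := by
    calc (2:ℝ) ≤ Real.exp 1 := by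
          have := Real.add_one_le_exp 1; linarith
    _ ≤ _ := Real.exp_le_exp.mpr hA1
  have hden : Real.exp (u ^ 2 / 2 - u ^ γ / C₂) / 2 ≤
      Real.exp ((u / (1 + x)) ^ 2 / 2) - 1 := by
    have h1 : Real.exp (u ^ 2 / 2 - u ^ γ / C₂) ≤ Real.exp ((u / (1 + x)) ^ 2 / 2) :=
      Real.exp_le_exp.mpr hAle
    linarith
  -- main chain
  have hNδ : N δ ≤ C₄ * Real.exp (C₅ * u ^ γ) := by
    have := hN δ hδ0 hδD
    rwa [key1] at this
  have step1 : Q u ≤ (C₄ * Real.exp (C₅ * u ^ γ)) /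
      (Real.exp (u ^ 2 / 2 - u ^ γ / C₂) / 2) := by
    refine le_trans (hQbound u hu0 δ hδ0 hδD) ?_
    exact div_le_div₀ (by positivity) hNδ (by positivity) hden
  have step2 : (C₄ * Real.exp (C₅ * u ^ γ)) / (Real.exp (u ^ 2 / 2 - u ^ γ / C₂) / 2) =
      2 * C₄ * Real.exp (C₅ * u ^ γ - (u ^ 2 / 2 - u ^ γ / C₂)) := by
    simp only [Real.exp_sub]
    have p1 : (0:ℝ) < Real.exp (u ^ 2 / 2) := Real.exp_pos _
    have p2 : (0:ℝ) < Real.exp (u ^ γ / C₂) := Real.exp_pos _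
    set E1 := Real.exp (C₅ * u ^ γ) with hE1
    set E2 := Real.exp (u ^ 2 / 2) with hE2
    set E3 := Real.exp (u ^ γ / C₂) with hE3
    field_simp [p1.ne', p2.ne']
  have h2C₄ : 2 * C₄ ≤ Real.exp ((|Real.log (2 * C₄)| + 1) * u ^ γ) := by
    have h3 : Real.log (2 * C₄) ≤ (|Real.log (2 * C₄)| + 1) * u ^ γ := by
      nlinarith [le_abs_self (Real.log (2 * C₄)), abs_nonneg (Real.log (2 * C₄)), huγ1]
    calc 2 * C₄ = Real.exp (Real.log (2 * C₄)) := (Real.exp_log (by positivity)).symm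
    _ ≤ _ := Real.exp_le_exp.mpr h3
  calc Q u ≤ 2 * C₄ * Real.exp (C₅ * u ^ γ - (u ^ 2 / 2 - u ^ γ / C₂)) := by
        rw [← step2]; exact step1
  _ ≤ Real.exp ((|Real.log (2 * C₄)| + 1) * u ^ γ) *
        Real.exp (C₅ * u ^ γ - (u ^ 2 / 2 - u ^ γ / C₂)) :=
      mul_le_mul_of_nonneg_right h2C₄ (Real.exp_nonneg _)
  _ = Real.exp (-(u ^ 2) / 2 + (C₅ + 1 / C₂ + |Real.log (2 * C₄)| + 1) * u ^ γ) := by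
      rw [← Real.exp_add]; congr 1; ring
end
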